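/- For k ≥ 2, the quotient J(k)/J(2k-1) is abelian, where J(k) denotes the group of automorphisms of a free group F acting trivially on F/F_k. -/

import Mathlib

variable {α : Type*}

open scoped commutatorElement

section Aux

variable {G : Type*} [Group G]

lemma lcs_succ_eq (n : ℕ) :
    (⊤ : Subgroup G).lowerCentralSeries (n + 1) = ⁅(⊤ : Subgroup G).lowerCentralSeries n, (⊤ : Subgroup G)⁆ := rfl

/-- Membership of `a * b⁻¹` in a normal subgroup as an equation in the quotient. -/
lemma aux_mem_iff {N : Subgroup G} [hN : N.Normal] {a b : G} :
    a * b⁻¹ ∈ N ↔ (QuotientGroup.mk' N) a = (QuotientGroup.mk' N) b := by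
  rw [QuotientGroup.mk'_apply, QuotientGroup.mk'_apply, QuotientGroup.eq]
  constructor
  · intro h; simpa using N.inv_mem (hN.mem_comm h)
  · intro h
    have h2 := N.inv_mem h
    rw [mul_inv_rev, inv_inv] at h2
    exact hN.mem_comm h2

lemma aux_commute {N : Subgroup G} [N.Normal] {a b : G} (h : ⁅a, b⁆ ∈ N) :
    Commute ((QuotientGroup.mk' N) a) ((QuotientGroup.mk' N) b) := by
  refine commutatorElement_eq_one_iff_commute.mp ?_
  rw [← map_commutatorElement]
  exact (QuotientGroup.eq_one_iff _).mpr h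

/-- Three subgroups lemma, relative version. -/
lemma three_subgroups_le {H₁ H₂ H₃ N : Subgroup G} [N.Normal]
    (h1 : ⁅⁅H₂, H₃⁆, H₁⁆ ≤ N) (h2 : ⁅⁅H₃, H₁⁆, H₂⁆ ≤ N) : ⁅⁅H₁, H₂⁆, H₃⁆ ≤ N := by
  have key : ∀ K₁ K₂ K₃ : Subgroup G, ⁅⁅K₁, K₂⁆, K₃⁆ ≤ N ↔
      ⁅⁅K₁.map (QuotientGroup.mk' N), K₂.map (QuotientGroup.mk' N)⁆,
        K₃.map (QuotientGroup.mk' N)⁆ = ⊥ := by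
    intro K₁ K₂ K₃
    rw [← Subgroup.map_commutator, ← Subgroup.map_commutator, Subgroup.map_eq_bot_iff,
      QuotientGroup.ker_mk']
  rw [key] at h1 h2 ⊢
  exact Subgroup.commutator_commutator_eq_bot_of_rotate h1 h2

/-- `⁅γ_m, γ_n⁆ ≤ γ_{m+n+1}` (Mathlib indexing). -/
lemma lcs_commutator_le : ∀ n m : ℕ,
    ⁅(⊤ : Subgroup G).lowerCentralSeries m, (⊤ : Subgroup G).lowerCentralSeries n⁆ ≤ (⊤ : Subgroup G).lowerCentralSeries (m + n + 1) := by
  intro n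
  induction n with
  | zero =>
    intro m
    rw [lcs_succ_eq]
    exact Subgroup.commutator_mono le_rfl le_top
  | succ n ih =>
    intro m
    rw [lcs_succ_eq n, Subgroup.commutator_comm]
    apply three_subgroups_le
    · rw [Subgroup.commutator_comm ⊤, ← lcs_succ_eq]
      have h := ih (m + 1)
      rwa [show m + 1 + n + 1 = m + (n + 1) + 1 by omega] at h
    · calc ⁅⁅(⊤ : Subgroup G).lowerCentralSeries m, (⊤ : Subgroup G).lowerCentralSeries n⁆, (⊤ : Subgroup G)⁆
          ≤ ⁅(⊤ : Subgroup G).lowerCentralSeries (m + n + 1), (⊤ : Subgroup G)⁆ :=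
            Subgroup.commutator_mono (ih m) le_rfl
        _ = (⊤ : Subgroup G).lowerCentralSeries (m + (n + 1) + 1) := by
            rw [← lcs_succ_eq]; congr 1

/-- Pure group computation used for the generator step. -/
lemma grp_calc {Q : Type*} [Group Q] {u v y z : Q} (hu : ∀ w, Commute u w)
    (hvy : Commute v y) (hvc : Commute v (y * z * y⁻¹ * z⁻¹)) :
    u * y * (v * z) * (u * y)⁻¹ * (v * z)⁻¹ = y * z * y⁻¹ * z⁻¹ := by
  have e1 : u * y * (v * z) * (u * y)⁻¹ * (v * z)⁻¹
      = u * (y * (v * z) * y⁻¹) * u⁻¹ * (v * z)⁻¹ := by group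
  rw [e1, (hu (y * (v * z) * y⁻¹)).eq]
  have e2 : y * (v * z) * y⁻¹ * u * u⁻¹ * (v * z)⁻¹ = y * v * (z * y⁻¹ * (z⁻¹ * v⁻¹)) := by
    group
  rw [e2, ← hvy.eq]
  have e3 : v * y * (z * y⁻¹ * (z⁻¹ * v⁻¹)) = v * (y * z * y⁻¹ * z⁻¹) * v⁻¹ := by group
  rw [e3, hvc.eq]
  group

/-- Key lemma: if `f` acts trivially mod `γ_p` then it acts trivially on `γ_m` mod `γ_{m+p}`. -/
lemma johnson_action {p : ℕ} (f : MulAut G)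
    (hf : ∀ x : G, f x * x⁻¹ ∈ (⊤ : Subgroup G).lowerCentralSeries p) :
    ∀ m : ℕ, ∀ a ∈ (⊤ : Subgroup G).lowerCentralSeries m, f a * a⁻¹ ∈ (⊤ : Subgroup G).lowerCentralSeries (m + p) := by
  intro m
  induction m with
  | zero => intro a _; rw [Nat.zero_add]; exact hf a
  | succ m ih =>
    let D : Subgroup G :=
      { carrier := {a : G | f a * a⁻¹ ∈ (⊤ : Subgroup G).lowerCentralSeries (m + 1 + p)}
        one_mem' := by simpa using one_mem ((⊤ : Subgroup G).lowerCentralSeries (m + 1 + p))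
        mul_mem' := by
          intro a b ha hb
          have key : f (a * b) * (a * b)⁻¹ = (f a * a⁻¹) * (a * (f b * b⁻¹) * a⁻¹) := by
            rw [map_mul]; group
          simp only [Set.mem_setOf_eq] at ha hb ⊢
          rw [key]
          exact mul_mem ha ((Subgroup.lowerCentralSeries_normal ⊤ (m + 1 + p)).conj_mem _ hb a)
        inv_mem' := by
          intro a ha
          simp only [Set.mem_setOf_eq] at ha ⊢
          have key : f a⁻¹ * a⁻¹⁻¹ = a⁻¹ * (f a * a⁻¹)⁻¹ * a⁻¹⁻¹ := by
            rw [map_inv]; group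
          rw [key]
          exact (Subgroup.lowerCentralSeries_normal ⊤ (m + 1 + p)).conj_mem _ (inv_mem ha) a⁻¹ }
    intro a ha
    suffices h : (⊤ : Subgroup G).lowerCentralSeries (m + 1) ≤ D from h ha
    rw [lcs_succ_eq, Subgroup.commutator_le]
    intro y hy z _
    show f ⁅y, z⁆ * ⁅y, z⁆⁻¹ ∈ (⊤ : Subgroup G).lowerCentralSeries (m + 1 + p)
    have hu : f y * y⁻¹ ∈ (⊤ : Subgroup G).lowerCentralSeries (m + p) := ih y hy
    have hv : f z * z⁻¹ ∈ (⊤ : Subgroup G).lowerCentralSeries p := hf z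
    set N := (⊤ : Subgroup G).lowerCentralSeries (m + 1 + p) with hNdef
    set π := QuotientGroup.mk' N with hπ
    rw [aux_mem_iff]
    have c1 : ∀ w : G ⧸ N, Commute (π (f y * y⁻¹)) w := by
      intro w
      obtain ⟨w, rfl⟩ := QuotientGroup.mk'_surjective N w
      apply aux_commute
      have : ⁅f y * y⁻¹, w⁆ ∈ ⁅(⊤ : Subgroup G).lowerCentralSeries (m + p), (⊤ : Subgroup G)⁆ :=
        Subgroup.commutator_mem_commutator hu (Subgroup.mem_top w)
      rw [← lcs_succ_eq] at this
      rwa [show m + p + 1 = m + 1 + p by omega] at this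
    have c2 : Commute (π (f z * z⁻¹)) (π y) := by
      apply aux_commute
      have : ⁅f z * z⁻¹, y⁆ ∈ ⁅(⊤ : Subgroup G).lowerCentralSeries p, (⊤ : Subgroup G).lowerCentralSeries m⁆ :=
        Subgroup.commutator_mem_commutator hv hy
      have h2 := lcs_commutator_le m p this
      rwa [show p + m + 1 = m + 1 + p by omega] at h2
    have c3 : Commute (π (f z * z⁻¹)) (π (y * z * y⁻¹ * z⁻¹)) := by
      apply aux_commute
      have hyz : y * z * y⁻¹ * z⁻¹ ∈ (⊤ : Subgroup G).lowerCentralSeries (m + 1) := by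
        rw [lcs_succ_eq]
        exact Subgroup.commutator_mem_commutator hy (Subgroup.mem_top z)
      have : ⁅f z * z⁻¹, y * z * y⁻¹ * z⁻¹⁆
          ∈ ⁅(⊤ : Subgroup G).lowerCentralSeries p, (⊤ : Subgroup G).lowerCentralSeries (m + 1)⁆ :=
        Subgroup.commutator_mem_commutator hv hyz
      have h2 := lcs_commutator_le (m + 1) p this
      exact Subgroup.lowerCentralSeries_antitone _ (by omega) h2
    have hfy : f y = (f y * y⁻¹) * y := by group
    have hfz : f z = (f z * z⁻¹) * z := by group
    calc π (f ⁅y, z⁆) = π (f y) * π (f z) * (π (f y))⁻¹ * (π (f z))⁻¹ := by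
          simp [commutatorElement_def, map_mul, map_inv]
      _ = π (f y * y⁻¹) * π y * (π (f z * z⁻¹) * π z)
            * (π (f y * y⁻¹) * π y)⁻¹ * (π (f z * z⁻¹) * π z)⁻¹ := by
          rw [hfy, hfz]; simp [map_mul, mul_assoc]
      _ = π y * π z * (π y)⁻¹ * (π z)⁻¹ :=
          grp_calc c1 c2 (by simpa [map_mul, map_inv, mul_assoc] using c3)
      _ = π ⁅y, z⁆ := by simp [commutatorElement_def, map_mul, map_inv]

/-- Two automorphisms acting trivially mod `γ_p` commute mod `γ_{p+p}`. -/
lemma johnson_comm {p : ℕ} (f g : MulAut G)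
    (hf : ∀ x : G, f x * x⁻¹ ∈ (⊤ : Subgroup G).lowerCentralSeries p)
    (hg : ∀ x : G, g x * x⁻¹ ∈ (⊤ : Subgroup G).lowerCentralSeries p) (x : G) :
    f (g x) * (g (f x))⁻¹ ∈ (⊤ : Subgroup G).lowerCentralSeries (p + p) := by
  set N := (⊤ : Subgroup G).lowerCentralSeries (p + p) with hNdef
  set π := QuotientGroup.mk' N with hπ
  rw [aux_mem_iff]
  have e1 : f (g x) = f (g x * x⁻¹) * ((f x * x⁻¹) * x) := by
    rw [map_mul, map_inv]; group
  have e2 : g (f x) = g (f x * x⁻¹) * ((g x * x⁻¹) * x) := by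
    rw [map_mul, map_inv]; group
  have hfd : π (f (g x * x⁻¹)) = π (g x * x⁻¹) :=
    aux_mem_iff.mp (johnson_action f hf p _ (hg x))
  have hgd : π (g (f x * x⁻¹)) = π (f x * x⁻¹) :=
    aux_mem_iff.mp (johnson_action g hg p _ (hf x))
  have hcomm : Commute (π (g x * x⁻¹)) (π (f x * x⁻¹)) := by
    apply aux_commute
    have : ⁅g x * x⁻¹, f x * x⁻¹⁆ ∈ ⁅(⊤ : Subgroup G).lowerCentralSeries p, (⊤ : Subgroup G).lowerCentralSeries p⁆ :=
      Subgroup.commutator_mem_commutator (hg x) (hf x)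
    exact Subgroup.lowerCentralSeries_antitone _ (by omega) (lcs_commutator_le p p this)
  calc π (f (g x)) = π (f (g x * x⁻¹)) * (π (f x * x⁻¹) * π x) := by
        rw [e1]; simp [map_mul]
    _ = π (g x * x⁻¹) * π (f x * x⁻¹) * π x := by rw [hfd, mul_assoc]
    _ = π (f x * x⁻¹) * π (g x * x⁻¹) * π x := by rw [hcomm.eq]
    _ = π (g (f x * x⁻¹)) * (π (g x * x⁻¹) * π x) := by rw [hgd, mul_assoc]
    _ = π (g (f x)) := by rw [e2]; simp [map_mul]

end Aux

/-- `f ∈ J(k)`: the automorphism `f` of the free group `F` induces the identity on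
`F/F_k`.  In Mathlib's indexing `F_k = lowerCentralSeries F (k-1)`. -/
def InJohnsonAut (k : ℕ) (f : MulAut (FreeGroup α)) : Prop :=
  ∀ x : FreeGroup α, f x * x⁻¹ ∈ (⊤ : Subgroup (FreeGroup α)).lowerCentralSeries (k - 1)

open scoped commutatorElement

/-- for `k ≥ 2` the quotient `J(k)/J(2k-1)` is abelian, i.e. every
commutator of elements of `J(k)` lies in `J(2k-1)`. -/
theorem johnson_bordism_stmt5 (k : ℕ) (hk : 2 ≤ k)
    (f g : MulAut (FreeGroup α))
    (hf : InJohnsonAut k f) (hg : InJohnsonAut k g) :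
    InJohnsonAut (2 * k - 1) ⁅f, g⁆ := by
  intro x
  have key := johnson_comm f g hf hg (f⁻¹ (g⁻¹ x))
  have e : g (f (f⁻¹ (g⁻¹ x))) = x := by
    simp [MulAut.inv_def]
  rw [e] at key
  have e2 : ⁅f, g⁆ x = f (g (f⁻¹ (g⁻¹ x))) := by
    simp [commutatorElement_def, MulAut.mul_apply]
  rw [show 2 * k - 1 - 1 = (k - 1) + (k - 1) by omega, e2]
  exact key
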